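/- Let H be a complex Hilbert space, let φ, ψ ∈ H be two mutually orthogonal unit vectors, let λ ∈ (0,1) with λ ≠ 1/2, and let A = λ·P[φ] + (1−λ)·P[ψ], where P[χ] denotes the orthogonal projection onto the span of the unit vector χ. Then A ≠ 0, A ≠ I, both A and A' = I − A are regular effects (neither A ≤ A' nor A' ≤ A), yet ‖A‖ = max{λ, 1−λ} < 1. Hence the two-valued POM with range {0, A, A', I} is regular but fails the norm-1-property. -/

import Mathlib

open ContinuousLinearMap
open scoped InnerProductSpace

lemma isPositive_of_inner_real' {H : Type*} [NormedAddCommGroup H] [InnerProductSpace ℂ H]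
    [CompleteSpace H] (T : H →L[ℂ] H) (r : H → ℝ) (h : ∀ x, ⟪T x, x⟫_ℂ = (r x : ℂ))
    (hr : ∀ x, 0 ≤ r x) : T.IsPositive := by
  rw [ContinuousLinearMap.isPositive_iff_complex]
  intro x
  rw [h x]
  simpa using hr x

lemma eig_nonneg_of_isPositive' {H : Type*} [NormedAddCommGroup H] [InnerProductSpace ℂ H]
    [CompleteSpace H] {T : H →L[ℂ] H} (hT : T.IsPositive) {v : H} (hv : ‖v‖ = 1) {c : ℝ}
    (hc : T v = (c : ℂ) • v) : 0 ≤ c := by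
  have h := hT.inner_nonneg_left v
  have h2 : ⟪(c : ℂ) • v, v⟫_ℂ = (c : ℂ) := by
    rw [inner_smul_left,
      show ⟪v, v⟫_ℂ = ((‖v‖ : ℝ) : ℂ) ^ 2 from inner_self_eq_norm_sq_to_K v, hv]
    simp [Complex.conj_ofReal]
  rw [hc, h2] at h
  simpa using h

/-- a regular two-valued POM which fails the norm-1-property. -/
theorem regular_two_valued_pom_without_norm_one
    {H : Type*} [NormedAddCommGroup H] [InnerProductSpace ℂ H] [CompleteSpace H]
    (φ ψ : H) (hφ : ‖φ‖ = 1) (hψ : ‖ψ‖ = 1) (horth : ⟪φ, ψ⟫_ℂ = 0)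
    (lam : ℝ) (h0 : 0 < lam) (h1 : lam < 1) (hhalf : lam ≠ 1 / 2)
    (A : H →L[ℂ] H)
    (hA : A = (lam : ℂ) • ((ℂ ∙ φ).subtypeL.comp (ℂ ∙ φ).orthogonalProjectionOnto)
        + ((1 - lam : ℝ) : ℂ) • ((ℂ ∙ ψ).subtypeL.comp (ℂ ∙ ψ).orthogonalProjectionOnto)) :
    (0 ≤ A ∧ A ≤ 1) ∧ A ≠ 0 ∧ A ≠ 1 ∧
      (¬ A ≤ 1 - A ∧ ¬ (1 - A) ≤ A) ∧
      (¬ (1 - A) ≤ 1 - (1 - A) ∧ ¬ (1 - (1 - A)) ≤ 1 - A) ∧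
      ‖A‖ = max lam (1 - lam) ∧ ‖A‖ < 1 := by
  have hφ0 : φ ≠ 0 := fun h => by simp [h] at hφ
  have horth' : ⟪ψ, φ⟫_ℂ = 0 := by rw [← inner_conj_symm, horth, map_zero]
  have hφφ : ⟪φ, φ⟫_ℂ = 1 := by
    rw [inner_self_eq_norm_sq_to_K, hφ]; norm_num
  have hψψ : ⟪ψ, ψ⟫_ℂ = 1 := by
    rw [inner_self_eq_norm_sq_to_K, hψ]; norm_num
  have habs : ‖1 - (lam : ℂ)‖ = 1 - lam := by
    rw [show (1 - (lam : ℂ)) = ((1 - lam : ℝ) : ℂ) by push_cast; ring, Complex.norm_real, Real.norm_eq_abs]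
    exact abs_of_pos (by linarith only [h1])
  have hAx : ∀ x, A x = ((lam : ℂ) * ⟪φ, x⟫_ℂ) • φ + (((1 - lam : ℝ) : ℂ) * ⟪ψ, x⟫_ℂ) • ψ := by
    intro x
    rw [hA]
    simp [Submodule.starProjection_unit_singleton ℂ hφ, Submodule.starProjection_unit_singleton ℂ hψ,
      mul_smul]
  have hAφ : A φ = ((lam : ℝ) : ℂ) • φ := by
    rw [hAx φ, hφφ, horth']; simp
  have hAψ : A ψ = ((1 - lam : ℝ) : ℂ) • ψ := by
    rw [hAx ψ, hψψ, horth]; simp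
  -- Bessel
  have ho : Orthonormal ℂ ![φ, ψ] := by
    constructor
    · intro i; fin_cases i <;> simpa
    · intro i j hij
      fin_cases i <;> fin_cases j <;> simp_all
  have hB : ∀ x : H, ‖⟪φ, x⟫_ℂ‖ ^ 2 + ‖⟪ψ, x⟫_ℂ‖ ^ 2 ≤ ‖x‖ ^ 2 := by
    intro x
    have := ho.sum_inner_products_le (s := Finset.univ) x
    simpa [Fin.sum_univ_two] using this
  have hin : ∀ x, ⟪A x, x⟫_ℂ =
      ((lam * ‖⟪φ, x⟫_ℂ‖ ^ 2 + (1 - lam) * ‖⟪ψ, x⟫_ℂ‖ ^ 2 : ℝ) : ℂ) := by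
    intro x
    rw [hAx x]
    simp [inner_add_left, inner_smul_left, map_mul]
    rw [← inner_conj_symm x φ, ← inner_conj_symm x ψ]
    rw [mul_left_comm ⟪φ, x⟫_ℂ, mul_left_comm ⟪ψ, x⟫_ℂ, RCLike.mul_conj, RCLike.mul_conj]
    norm_num
  have hApos : (0 : H →L[ℂ] H) ≤ A := by
    rw [ContinuousLinearMap.nonneg_iff_isPositive]
    refine isPositive_of_inner_real' A _ hin fun x => ?_
    beta_reduce
    have p1 := mul_nonneg h0.le (sq_nonneg ‖⟪φ, x⟫_ℂ‖)
    have p2 := mul_nonneg (by linarith only [h1] : (0:ℝ) ≤ 1 - lam) (sq_nonneg ‖⟪ψ, x⟫_ℂ‖)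
    linarith only [p1, p2]
  have hAle1 : A ≤ 1 := by
    rw [ContinuousLinearMap.le_def]
    refine isPositive_of_inner_real' _
      (fun x => ‖x‖ ^ 2 - (lam * ‖⟪φ, x⟫_ℂ‖ ^ 2 + (1 - lam) * ‖⟪ψ, x⟫_ℂ‖ ^ 2)) (fun x => ?_)
      (fun x => ?_)
    · beta_reduce
      have hxx : ⟪x, x⟫_ℂ = ((‖x‖ : ℝ) : ℂ) ^ 2 := inner_self_eq_norm_sq_to_K x
      rw [sub_apply, one_apply_eq_self, inner_sub_left, hin x, hxx]
      push_cast
      ring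
    · beta_reduce
      have p1 := mul_nonneg (by linarith only [h1] : (0:ℝ) ≤ 1 - lam) (sq_nonneg ‖⟪φ, x⟫_ℂ‖)
      have p2 := mul_nonneg h0.le (sq_nonneg ‖⟪ψ, x⟫_ℂ‖)
      linarith only [hB x, p1, p2]
  have hlam0 : ((lam : ℝ) : ℂ) ≠ 0 := by
    simpa using h0.ne'
  have hA0 : A ≠ 0 := by
    intro h
    have : A φ = 0 := by rw [h]; rfl
    rw [hAφ, smul_eq_zero] at this
    tauto
  have hA1 : A ≠ 1 := by
    intro h
    have hln : ((lam : ℝ) : ℂ) ≠ 1 := by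
      intro hc
      exact h1.ne (by exact_mod_cast hc)
    have hφeq : A φ = φ := by rw [h]; rfl
    rw [hAφ] at hφeq
    have h2 : (((lam : ℝ) : ℂ) - 1) • φ = 0 := by
      rw [sub_smul, one_smul, hφeq, sub_self]
    rw [smul_eq_zero] at h2
    rcases h2 with h' | h'
    · exact hln (by linear_combination h')
    · exact hφ0 h'
  -- regularity
  have hreg1 : ¬ A ≤ 1 - A := by
    intro h
    rw [ContinuousLinearMap.le_def] at h
    have e1 : (1 - A - A) φ = ((1 - 2 * lam : ℝ) : ℂ) • φ := by
      simp only [sub_apply, one_apply_eq_self, hAφ]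
      push_cast
      module
    have e2 : (1 - A - A) ψ = ((2 * lam - 1 : ℝ) : ℂ) • ψ := by
      simp only [sub_apply, one_apply_eq_self, hAψ]
      push_cast
      module
    have c1 := eig_nonneg_of_isPositive' h hφ e1
    have c2 := eig_nonneg_of_isPositive' h hψ e2
    exact hhalf (by linarith only [c1, c2])
  have hreg2 : ¬ (1 - A) ≤ A := by
    intro h
    rw [ContinuousLinearMap.le_def] at h
    have e1 : (A - (1 - A)) φ = ((2 * lam - 1 : ℝ) : ℂ) • φ := by
      simp only [sub_apply, one_apply_eq_self, hAφ]
      push_cast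
      module
    have e2 : (A - (1 - A)) ψ = ((1 - 2 * lam : ℝ) : ℂ) • ψ := by
      simp only [sub_apply, one_apply_eq_self, hAψ]
      push_cast
      module
    have c1 := eig_nonneg_of_isPositive' h hφ e1
    have c2 := eig_nonneg_of_isPositive' h hψ e2
    exact hhalf (by linarith only [c1, c2])
  -- norm
  set M := max lam (1 - lam) with hM
  have hM0 : 0 ≤ M := le_trans h0.le (le_max_left _ _)
  have hbound : ∀ x : H, ‖A x‖ ≤ M * ‖x‖ := by
    intro x
    have horthsum : ⟪((lam : ℂ) * ⟪φ, x⟫_ℂ) • φ,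
        (((1 - lam : ℝ) : ℂ) * ⟪ψ, x⟫_ℂ) • ψ⟫_ℂ = 0 := by
      simp [inner_smul_left, inner_smul_right, horth]
    have hsq : ‖A x‖ ^ 2 = lam ^ 2 * ‖⟪φ, x⟫_ℂ‖ ^ 2 + (1 - lam) ^ 2 * ‖⟪ψ, x⟫_ℂ‖ ^ 2 := by
      rw [hAx x, @norm_add_sq ℂ, horthsum]
      simp [norm_smul, hφ, hψ, habs, abs_of_pos h0]
      ring
    have hl : lam ≤ M := le_max_left _ _
    have hr : 1 - lam ≤ M := le_max_right _ _
    have h1' : (0:ℝ) ≤ (M ^ 2 - lam ^ 2) * ‖⟪φ, x⟫_ℂ‖ ^ 2 := by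
      apply mul_nonneg _ (sq_nonneg _)
      nlinarith only [hl, h0]
    have h2' : (0:ℝ) ≤ (M ^ 2 - (1 - lam) ^ 2) * ‖⟪ψ, x⟫_ℂ‖ ^ 2 := by
      apply mul_nonneg _ (sq_nonneg _)
      nlinarith only [hr, h1]
    have h3' : (0:ℝ) ≤ M ^ 2 * (‖x‖ ^ 2 - ‖⟪φ, x⟫_ℂ‖ ^ 2 - ‖⟪ψ, x⟫_ℂ‖ ^ 2) := by
      apply mul_nonneg (sq_nonneg _)
      linarith only [hB x]
    have hsqle : ‖A x‖ ^ 2 ≤ (M * ‖x‖) ^ 2 := by nlinarith only [h1', h2', h3', hsq]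
    have hnn : (0:ℝ) ≤ M * ‖x‖ := mul_nonneg hM0 (norm_nonneg x)
    nlinarith only [hsqle, hnn, norm_nonneg (A x)]
  have hnormle : ‖A‖ ≤ M := A.opNorm_le_bound hM0 hbound
  have hAφn : ‖A φ‖ = lam := by
    rw [hAφ, norm_smul, hφ]
    simp [abs_of_pos h0]
  have hAψn : ‖A ψ‖ = 1 - lam := by
    rw [hAψ, norm_smul, hψ, mul_one, Complex.norm_real, Real.norm_eq_abs]
    exact abs_of_pos (by linarith only [h1])
  have hnorm : ‖A‖ = M := by
    refine le_antisymm hnormle (max_le ?_ ?_)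
    · calc lam = ‖A φ‖ := hAφn.symm
        _ ≤ ‖A‖ * ‖φ‖ := A.le_opNorm φ
        _ = ‖A‖ := by rw [hφ, mul_one]
    · calc 1 - lam = ‖A ψ‖ := hAψn.symm
        _ ≤ ‖A‖ * ‖ψ‖ := A.le_opNorm ψ
        _ = ‖A‖ := by rw [hψ, mul_one]
  refine ⟨⟨hApos, hAle1⟩, hA0, hA1, ⟨hreg1, hreg2⟩, ?_, hnorm, ?_⟩
  · rw [sub_sub_cancel]
    exact ⟨hreg2, hreg1⟩
  · rw [hnorm]
    exact max_lt h1 (by linarith only [h0])
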